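/- Let τ be the real 3×3 matrix with rows (0,1,0), (1,0,1), (0,1,0), and for t ∈ ℝ let g_t := exp(tτ). Let D := {(v,w) ∈ ℝ³×ℝ³ : v₁+v₂+v₃ = 1, w₁+w₂+w₃ = 1, v₁w₁ − v₂w₂ + v₃w₃ = 0, and all vᵢ, wᵢ ≥ 0}. Then for every t > 0 and every (v,w) ∈ D: all entries of g_t v and of g_t w are strictly positive (in particular the coordinate sums σ(g_t v) and σ(g_t w) are positive), and the point ( g_t v / σ(g_t v), g_t w / σ(g_t w) ) lies in D and has all six coordinates strictly positive. -/

import Mathlib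

/-!
With `J = diag(1, -1, 1)` one has `τᵀ J = -J τ`, i.e. `τ ∈ 𝔰𝔬(J)`, so `g_t = exp(tτ)` satisfies
`g_tᵀ J g_t = J` and preserves the form `v₁w₁ - v₂w₂ + v₃w₃`. The matrix `τ` is nonnegative and
irreducible, so for `t > 0` every entry of `exp(tτ) = ∑ tᵏτᵏ/k!` is positive, and a positive matrix
maps nonzero nonnegative vectors to positive vectors. Normalizing by the (positive) coordinate sums
keeps the vanishing of the form, which is bilinear.
-/

open Matrix

/-- `τ = e₁ + e₂ + f₁ + f₂` is the sum of the Chevalley generators of `sl₃(ℝ)`. -/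
def tauMat : Matrix (Fin 3) (Fin 3) ℝ := !![0, 1, 0; 1, 0, 1; 0, 1, 0]

/-- The coordinate sum `σ(x) = x₁ + x₂ + x₃` of a vector `x ∈ ℝ³`. -/
def coordSum (x : Fin 3 → ℝ) : ℝ := x 0 + x 1 + x 2

/-- The realization of the totally nonnegative part of the complete flag variety of
`SL₃(ℝ)`: pairs `(v, w) ∈ ℝ³ × ℝ³` with `σ(v) = 1`, `σ(w) = 1`,
`v₁w₁ - v₂w₂ + v₃w₃ = 0`, and all coordinates nonnegative. -/
def tnnFlagD : Set ((Fin 3 → ℝ) × (Fin 3 → ℝ)) :=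
  {p | coordSum p.1 = 1 ∧ coordSum p.2 = 1 ∧
    p.1 0 * p.2 0 - p.1 1 * p.2 1 + p.1 2 * p.2 2 = 0 ∧
    (∀ i, 0 ≤ p.1 i) ∧ (∀ i, 0 ≤ p.2 i)}

namespace Matrix

variable {n : Type*} [Fintype n]

theorem mulVec_apply_pos {R : Type*} [Semiring R] [PartialOrder R] [IsStrictOrderedRing R]
    {A : Matrix n n R} (hA : ∀ i j, 0 < A i j) {v : n → R} (hv : ∀ j, 0 ≤ v j) (hv0 : v ≠ 0)
    (i : n) : 0 < (A *ᵥ v) i := by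
  obtain ⟨j, hj⟩ := Function.ne_iff.mp hv0
  exact Finset.sum_pos' (fun k _ => mul_nonneg (hA i k).le (hv k))
    ⟨j, Finset.mem_univ _, mul_pos (hA i j) ((hv j).lt_of_ne' hj)⟩

theorem dotProduct_mulVec_mulVec_of_transpose_mul_mul {R : Type*} [CommRing R]
    {g J : Matrix n n R} (hg : gᵀ * J * g = J) (v w : n → R) :
    (g *ᵥ v) ⬝ᵥ (J *ᵥ (g *ᵥ w)) = v ⬝ᵥ (J *ᵥ w) := by
  rw [dotProduct_mulVec, ← vecMul_transpose, vecMul_vecMul, ← dotProduct_mulVec, mulVec_mulVec, hg]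

variable [DecidableEq n]

theorem IsSkewAdjoint.transpose_exp_mul_mul_exp {𝔸 : Type*} [NormedCommRing 𝔸]
    [NormedAlgebra ℚ 𝔸] [CompleteSpace 𝔸] {J A : Matrix n n 𝔸} (hJ : IsUnit J)
    (hA : J.IsSkewAdjoint A) : (NormedSpace.exp A)ᵀ * J * NormedSpace.exp A = J := by
  have hJdet := (isUnit_iff_isUnit_det J).mp hJ
  have hAt : Aᵀ = J * -A * J⁻¹ := by
    rw [← hA, mul_nonsing_inv_cancel_right _ _ hJdet]
  rw [← exp_transpose, hAt, exp_conj _ _ hJ, exp_neg]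
  simp only [Matrix.mul_assoc]
  rw [nonsing_inv_mul_cancel_left _ _ hJdet,
    nonsing_inv_mul _ ((isUnit_iff_isUnit_det _).mp (isUnit_exp A)), Matrix.mul_one]

open scoped Norms.Operator in
theorem IsIrreducible.exp_smul_apply_pos {A : Matrix n n ℝ} (hA : A.IsIrreducible) {t : ℝ}
    (ht : 0 < t) (i j : n) : 0 < NormedSpace.exp (t • A) i j := by
  obtain ⟨k, -, hk⟩ := (isIrreducible_iff_exists_pow_pos hA.nonneg).mp hA i j
  have hsum := Pi.hasSum.mp (Pi.hasSum.mp (NormedSpace.exp_series_hasSum_exp' (𝕂 := ℝ) (t • A)) i) j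
  have hterm (m : ℕ) : ((m.factorial : ℝ)⁻¹ • (t • A) ^ m) i j
      = (m.factorial : ℝ)⁻¹ * t ^ m * (A ^ m) i j := by
    simp only [smul_pow, smul_apply, smul_eq_mul, mul_assoc]
  refine lt_of_lt_of_le ?_ (le_hasSum hsum k fun m _ => ?_)
  · rw [hterm]; positivity
  · rw [hterm]; exact mul_nonneg (by positivity) (pow_apply_nonneg hA.nonneg m i j)

end Matrix

theorem coordSum_pos {x : Fin 3 → ℝ} (hx : ∀ i, 0 < x i) : 0 < coordSum x := by
  have := hx 0; have := hx 1; have := hx 2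
  unfold coordSum; linarith

theorem ne_zero_of_coordSum_eq_one {x : Fin 3 → ℝ} (hx : coordSum x = 1) : x ≠ 0 := by
  rintro rfl
  simp [coordSum] at hx

theorem coordSum_inv_smul_self {x : Fin 3 → ℝ} (hx : coordSum x ≠ 0) :
    coordSum ((coordSum x)⁻¹ • x) = 1 := by
  simp only [coordSum, Pi.smul_apply, smul_eq_mul, ← mul_add]
  exact inv_mul_cancel₀ hx

theorem inv_coordSum_smul_mem_tnnFlagD {x y : Fin 3 → ℝ} (hx : ∀ i, 0 < x i)
    (hy : ∀ i, 0 < y i) (hxy : x 0 * y 0 - x 1 * y 1 + x 2 * y 2 = 0) :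
    ((coordSum x)⁻¹ • x, (coordSum y)⁻¹ • y) ∈ tnnFlagD := by
  have hsx := inv_pos.mpr (coordSum_pos hx)
  have hsy := inv_pos.mpr (coordSum_pos hy)
  refine ⟨coordSum_inv_smul_self (coordSum_pos hx).ne',
    coordSum_inv_smul_self (coordSum_pos hy).ne', ?_, fun i => (smul_pos hsx (hx i)).le,
    fun i => (smul_pos hsy (hy i)).le⟩
  simp only [Pi.smul_apply, smul_eq_mul]
  linear_combination (coordSum x)⁻¹ * (coordSum y)⁻¹ * hxy

def flagForm : Matrix (Fin 3) (Fin 3) ℝ := diagonal ![1, -1, 1]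

theorem dotProduct_flagForm_mulVec (v w : Fin 3 → ℝ) :
    v ⬝ᵥ (flagForm *ᵥ w) = v 0 * w 0 - v 1 * w 1 + v 2 * w 2 := by
  simp only [dotProduct, Fin.sum_univ_three, flagForm, mulVec_diagonal, cons_val_zero,
    cons_val_one, cons_val]
  ring

theorem isUnit_flagForm : IsUnit flagForm := by
  rw [isUnit_iff_isUnit_det, isUnit_iff_ne_zero]
  simp [flagForm, det_diagonal, Fin.prod_univ_three]

theorem tauMat_mem_skewAdjointMatricesSubmodule :
    tauMat ∈ skewAdjointMatricesSubmodule flagForm := by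
  rw [mem_skewAdjointMatricesSubmodule, Matrix.IsSkewAdjoint, Matrix.IsAdjointPair]
  ext i j
  fin_cases i <;> fin_cases j <;> simp [tauMat, flagForm, mul_apply, Fin.sum_univ_three]

theorem tauMat_sq : tauMat ^ 2 = !![1, 0, 1; 0, 2, 0; 1, 0, 1] := by
  rw [sq, tauMat, mul_fin_three]
  norm_num

theorem isIrreducible_tauMat : tauMat.IsIrreducible := by
  have hnonneg : ∀ i j, 0 ≤ tauMat i j := by
    intro i j
    fin_cases i <;> fin_cases j <;> simp [tauMat]
  have hpow : ∀ i j, 0 < (tauMat ^ 1) i j ∨ 0 < (tauMat ^ 2) i j := by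
    rw [pow_one, tauMat_sq]
    intro i j
    fin_cases i <;> fin_cases j <;> norm_num [tauMat]
  refine (isIrreducible_iff_exists_pow_pos hnonneg).mpr fun i j => ?_
  rcases hpow i j with h | h
  exacts [⟨1, one_pos, h⟩, ⟨2, two_pos, h⟩]

/-- For `t > 0`, the flow `(v, w) ↦ (g_t v / σ(g_t v), g_t w / σ(g_t w))` induced by
`g_t = exp(t τ)` maps the totally nonnegative part `D` into the totally positive part:
for `(v, w) ∈ D`, all entries of `g_t v` and `g_t w` are strictly positive (in particular
`σ(g_t v) > 0` and `σ(g_t w) > 0`), and the normalized pair lies in `D` with all six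
coordinates strictly positive. -/
theorem exp_tau_flow_maps_tnn_into_tp :
    ∀ t : ℝ, 0 < t → ∀ v w : Fin 3 → ℝ, (v, w) ∈ tnnFlagD →
      (∀ i, 0 < (NormedSpace.exp (t • tauMat)).mulVec v i) ∧
      (∀ i, 0 < (NormedSpace.exp (t • tauMat)).mulVec w i) ∧
      0 < coordSum ((NormedSpace.exp (t • tauMat)).mulVec v) ∧
      0 < coordSum ((NormedSpace.exp (t • tauMat)).mulVec w) ∧
      ((coordSum ((NormedSpace.exp (t • tauMat)).mulVec v))⁻¹ •
          (NormedSpace.exp (t • tauMat)).mulVec v,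
        (coordSum ((NormedSpace.exp (t • tauMat)).mulVec w))⁻¹ •
          (NormedSpace.exp (t • tauMat)).mulVec w) ∈ tnnFlagD ∧
      (∀ i, 0 < (coordSum ((NormedSpace.exp (t • tauMat)).mulVec v))⁻¹ •
          (NormedSpace.exp (t • tauMat)).mulVec v i) ∧
      (∀ i, 0 < (coordSum ((NormedSpace.exp (t • tauMat)).mulVec w))⁻¹ •
          (NormedSpace.exp (t • tauMat)).mulVec w i) := by
  intro t ht v w ⟨hv1, hw1, hvw, hv0, hw0⟩
  set g := NormedSpace.exp (t • tauMat)
  have hg : ∀ i j, 0 < g i j := isIrreducible_tauMat.exp_smul_apply_pos ht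
  have hgv := mulVec_apply_pos hg hv0 (ne_zero_of_coordSum_eq_one hv1)
  have hgw := mulVec_apply_pos hg hw0 (ne_zero_of_coordSum_eq_one hw1)
  have hskew : flagForm.IsSkewAdjoint (t • tauMat) := (mem_skewAdjointMatricesSubmodule _ _).mp
    (Submodule.smul_mem _ t tauMat_mem_skewAdjointMatricesSubmodule)
  have hq : (g *ᵥ v) 0 * (g *ᵥ w) 0 - (g *ᵥ v) 1 * (g *ᵥ w) 1 + (g *ᵥ v) 2 * (g *ᵥ w) 2 = 0 := by
    rw [← dotProduct_flagForm_mulVec, dotProduct_mulVec_mulVec_of_transpose_mul_mul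
      (hskew.transpose_exp_mul_mul_exp isUnit_flagForm), dotProduct_flagForm_mulVec, hvw]
  exact ⟨hgv, hgw, coordSum_pos hgv, coordSum_pos hgw, inv_coordSum_smul_mem_tnnFlagD hgv hgw hq,
    fun i => smul_pos (inv_pos.mpr (coordSum_pos hgv)) (hgv i),
    fun i => smul_pos (inv_pos.mpr (coordSum_pos hgw)) (hgw i)⟩
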